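/- arXiv:1601.01394 — 6 statements merged into one kernel-verified Lean document; each statement's English description precedes it below -/
import Mathlib

section
/- (Kuhn-Tucker condition for the smallest enclosing circle) Let P^1,...,P^m ∈ R^n and let Φ be the matrix with rows P^i. A probability vector λ* ∈ Δ^m achieves max_{λ∈Δ^m} f(λ,Φ), where f(λ,Φ) = Σ_i λ_i‖P^i‖² - ‖λΦ‖², if and only if there exists d_0 such that d(P^i, λ*Φ) = d_0 whenever λ*_i > 0 and d(P^i, λ*Φ) ≤ d_0 whenever λ*_i = 0. In that case Q* = λ*Φ is the center of the smallest enclosing circle and d_0 is its radius. -/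
open scoped RealInnerProductSpace

lemma stmt7_key {n m : ℕ} (P : Fin (m + 1) → EuclideanSpace ℝ (Fin n))
    (lam : Fin (m + 1) → ℝ) (hsum : ∑ i, lam i = 1) (Q : EuclideanSpace ℝ (Fin n)) :
    (∑ i, lam i * ‖P i‖ ^ 2) - ‖∑ i, lam i • P i‖ ^ 2
      = (∑ i, lam i * dist (P i) Q ^ 2) - dist (∑ i, lam i • P i) Q ^ 2 := by
  have hip : ⟪(∑ i, lam i • P i), Q⟫ = ∑ i, lam i * ⟪P i, Q⟫ := by
    rw [sum_inner]
    exact Finset.sum_congr rfl fun i _ => real_inner_smul_left _ _ _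
  have hd : ∀ a : EuclideanSpace ℝ (Fin n),
      dist a Q ^ 2 = ‖a‖ ^ 2 - 2 * ⟪a, Q⟫ + ‖Q‖ ^ 2 := by
    intro a
    rw [dist_eq_norm, @norm_sub_sq_real]
  have hexp : ∑ i, lam i * dist (P i) Q ^ 2
      = (∑ i, lam i * ‖P i‖ ^ 2) - 2 * (∑ i, lam i * ⟪P i, Q⟫) + ‖Q‖ ^ 2 := by
    calc ∑ i, lam i * dist (P i) Q ^ 2
        = ∑ i, (lam i * ‖P i‖ ^ 2 - 2 * (lam i * ⟪P i, Q⟫) + ‖Q‖ ^ 2 * lam i) :=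
          Finset.sum_congr rfl fun i _ => by rw [hd]; ring
      _ = _ := by
          rw [Finset.sum_add_distrib, Finset.sum_sub_distrib, ← Finset.mul_sum,
            ← Finset.mul_sum, hsum, mul_one]
  rw [hexp, hd, hip]
  ring

theorem stmt7 (n m : ℕ) (P : Fin (m + 1) → EuclideanSpace ℝ (Fin n))
    (f : (Fin (m + 1) → ℝ) → ℝ)
    (hf : ∀ lam, f lam = (∑ i, lam i * ‖P i‖ ^ 2) - ‖∑ i, lam i • P i‖ ^ 2)
    (lamStar : Fin (m + 1) → ℝ)
    (hpos : ∀ i, 0 ≤ lamStar i) (hsum : ∑ i, lamStar i = 1) :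
    ((∀ lam : Fin (m + 1) → ℝ, (∀ i, 0 ≤ lam i) → (∑ i, lam i) = 1 → f lam ≤ f lamStar) ↔
      ∃ d0 : ℝ,
        (∀ i, 0 < lamStar i → dist (P i) (∑ j, lamStar j • P j) = d0) ∧
        (∀ i, lamStar i = 0 → dist (P i) (∑ j, lamStar j • P j) ≤ d0)) ∧
    (∀ d0 : ℝ,
      (∀ i, 0 < lamStar i → dist (P i) (∑ j, lamStar j • P j) = d0) →
      (∀ i, lamStar i = 0 → dist (P i) (∑ j, lamStar j • P j) ≤ d0) →
      (∀ i, dist (P i) (∑ j, lamStar j • P j) ≤ d0) ∧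
      ∀ Q : EuclideanSpace ℝ (Fin n), ∃ i, d0 ≤ dist (P i) Q) := by
  set Qs : EuclideanSpace ℝ (Fin n) := ∑ j, lamStar j • P j with hQs
  -- there is a positive coordinate
  obtain ⟨k, hk⟩ : ∃ k, 0 < lamStar k := by
    by_contra h
    push_neg at h
    have hz : ∀ i, lamStar i = 0 := fun i => le_antisymm (h i) (hpos i)
    simp [hz] at hsum
  -- key identity specialised
  have hkey : ∀ (lam : Fin (m + 1) → ℝ), (∑ i, lam i) = 1 → ∀ Q,
      f lam = (∑ i, lam i * dist (P i) Q ^ 2) - dist (∑ i, lam i • P i) Q ^ 2 := by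
    intro lam hl Q
    rw [hf]
    exact stmt7_key P lam hl Q
  have hfstar : ∀ Q, f lamStar = (∑ i, lamStar i * dist (P i) Q ^ 2) - dist Qs Q ^ 2 := by
    intro Q
    rw [hkey lamStar hsum Q, hQs]
  have hfstarQs : f lamStar = ∑ i, lamStar i * dist (P i) Qs ^ 2 := by
    rw [hfstar Qs, dist_self]
    ring
  -- given the KKT condition, f lamStar = d0 ^ 2
  have hval : ∀ d0 : ℝ,
      (∀ i, 0 < lamStar i → dist (P i) Qs = d0) → f lamStar = d0 ^ 2 := by
    intro d0 h1
    rw [hfstarQs]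
    have : ∀ i ∈ Finset.univ, lamStar i * dist (P i) Qs ^ 2 = lamStar i * d0 ^ 2 := by
      intro i _
      rcases (hpos i).eq_or_lt with h | h
      · rw [← h]; ring
      · rw [h1 i h]
    rw [Finset.sum_congr rfl this, ← Finset.sum_mul, hsum, one_mul]
  constructor
  · constructor
    · -- maximality → KKT
      intro hmax
      -- key perturbation step
      have step : ∀ i j, 0 < lamStar i → dist (P j) Qs ^ 2 ≤ dist (P i) Qs ^ 2 := by
        intro i j hi
        by_cases hij : j = i
        · rw [hij]
        by_contra hlt
        push_neg at hlt
        set D : ℝ := dist (P j) Qs ^ 2 - dist (P i) Qs ^ 2 with hD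
        have hDpos : 0 < D := by simp only [hD]; linarith
        set B : ℝ := dist (P j) (P i) ^ 2 with hB
        have hBn : (0:ℝ) ≤ B := by positivity
        set t : ℝ := min (lamStar i) (D / (B + 1)) with ht
        have ht0 : 0 < t := lt_min hi (div_pos hDpos (by linarith))
        have hti : t ≤ lamStar i := min_le_left _ _
        have htD : t * (B + 1) ≤ D := by
          have := min_le_right (lamStar i) (D / (B + 1))
          calc t * (B + 1) ≤ (D / (B + 1)) * (B + 1) := by
                apply mul_le_mul_of_nonneg_right this (by linarith)
            _ = D := by field_simp
        set lam' : Fin (m + 1) → ℝ :=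
          fun x => lamStar x + (if x = j then t else 0) - (if x = i then t else 0) with hlam'
        have hpos' : ∀ x, 0 ≤ lam' x := by
          intro x
          by_cases hxi : x = i
          · subst hxi
            have hx : lam' x = lamStar x - t := by
              simp only [hlam']
              rw [if_neg (fun h => hij h.symm)]
              simp
            rw [hx]
            linarith
          · simp only [hlam', if_neg hxi]
            by_cases hxj : x = j
            · simp only [if_pos hxj]
              have := hpos x
              linarith
            · simp only [if_neg hxj]
              have := hpos x
              linarith
        have hsum' : ∑ x, lam' x = 1 := by
          simp only [hlam']
          rw [Finset.sum_sub_distrib, Finset.sum_add_distrib, hsum,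
            Finset.sum_ite_eq' Finset.univ j (fun _ => t),
            Finset.sum_ite_eq' Finset.univ i (fun _ => t)]
          simp
        have hL' : ∑ x, lam' x • P x = Qs + t • P j - t • P i := by
          simp only [hlam', sub_smul, add_smul, ite_smul, zero_smul]
          rw [Finset.sum_sub_distrib, Finset.sum_add_distrib,
            Finset.sum_ite_eq' Finset.univ j (fun x => t • P x),
            Finset.sum_ite_eq' Finset.univ i (fun x => t • P x)]
          simp [hQs]
        have hSum' : ∑ x, lam' x * dist (P x) Qs ^ 2
            = (∑ x, lamStar x * dist (P x) Qs ^ 2)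
              + t * dist (P j) Qs ^ 2 - t * dist (P i) Qs ^ 2 := by
          simp only [hlam', sub_mul, add_mul, ite_mul, zero_mul]
          rw [Finset.sum_sub_distrib, Finset.sum_add_distrib,
            Finset.sum_ite_eq' Finset.univ j (fun x => t * dist (P x) Qs ^ 2),
            Finset.sum_ite_eq' Finset.univ i (fun x => t * dist (P x) Qs ^ 2)]
          simp
        have hdist' : dist (∑ x, lam' x • P x) Qs ^ 2 = t ^ 2 * B := by
          rw [hL', dist_eq_norm]
          have heq : Qs + t • P j - t • P i - Qs = t • (P j - P i) := by
            rw [smul_sub]; abel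
          rw [heq, norm_smul, hB, dist_eq_norm, mul_pow]
          simp [abs_of_pos ht0]
        have hle := hmax lam' hpos' hsum'
        rw [hkey lam' hsum' Qs, hfstarQs, hSum', hdist'] at hle
        have hineq : t * D ≤ t ^ 2 * B := by simp only [hD]; nlinarith
        nlinarith [mul_pos ht0 hDpos, mul_le_mul_of_nonneg_left htD ht0.le, sq_nonneg t]
      refine ⟨dist (P k) Qs, fun i hi => ?_, fun i hi => ?_⟩
      · have h1 := step i k hi
        have h2 := step k i hk
        have := dist_nonneg (x := P i) (y := Qs)
        have := dist_nonneg (x := P k) (y := Qs)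
        nlinarith
      · have h1 := step k i hk
        have := dist_nonneg (x := P i) (y := Qs)
        have := dist_nonneg (x := P k) (y := Qs)
        nlinarith
    · -- KKT → maximality
      rintro ⟨d0, h1, h2⟩
      intro lam hl hls
      have hd0 : 0 ≤ d0 := (h1 k hk) ▸ dist_nonneg
      have hdle : ∀ i, dist (P i) Qs ≤ d0 := by
        intro i
        rcases (hpos i).eq_or_lt with h | h
        · exact h2 i h.symm
        · exact (h1 i h).le
      rw [hkey lam hls Qs, hval d0 h1]
      have : ∑ i, lam i * dist (P i) Qs ^ 2 ≤ ∑ i, lam i * d0 ^ 2 := by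
        apply Finset.sum_le_sum
        intro i _
        have h' := hdle i
        have h'' := dist_nonneg (x := P i) (y := Qs)
        have hsq : dist (P i) Qs ^ 2 ≤ d0 ^ 2 := by nlinarith
        exact mul_le_mul_of_nonneg_left hsq (hl i)
      rw [← Finset.sum_mul, hls, one_mul] at this
      nlinarith [sq_nonneg (dist (∑ i, lam i • P i) Qs)]
  · -- second part
    intro d0 h1 h2
    have hd0 : 0 ≤ d0 := (h1 k hk) ▸ dist_nonneg
    have hdle : ∀ i, dist (P i) Qs ≤ d0 := by
      intro i
      rcases (hpos i).eq_or_lt with h | h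
      · exact h2 i h.symm
      · exact (h1 i h).le
    refine ⟨hdle, fun Q => ?_⟩
    by_contra hc
    push_neg at hc
    have hsl : ∑ i, lamStar i * dist (P i) Q ^ 2 < ∑ i, lamStar i * d0 ^ 2 := by
      apply Finset.sum_lt_sum
      · intro i _
        have h' := hc i
        have h'' := dist_nonneg (x := P i) (y := Q)
        have hsq : dist (P i) Q ^ 2 ≤ d0 ^ 2 := by nlinarith
        exact mul_le_mul_of_nonneg_left hsq (hpos i)
      · refine ⟨k, Finset.mem_univ k, ?_⟩
        have h' := hc k
        have h'' := dist_nonneg (x := P k) (y := Q)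
        have hsq : dist (P k) Q ^ 2 < d0 ^ 2 := by nlinarith
        exact mul_lt_mul_of_pos_left hsq hk
    rw [← Finset.sum_mul, hsum, one_mul] at hsl
    have hfQ := hfstar Q
    rw [hval d0 h1] at hfQ
    nlinarith [sq_nonneg (dist Qs Q)]
end

section
/- Let P^1,...,P^m ∈ R^n satisfy the situation-1 assumptions: P^i are in general position, Q^0 is the equidistant point in the affine hull L_0 of P^1,...,P^m, L_k is the affine hull of P^{k+1},...,P^m, Q^k = π(Q^{k-1}|L_k), and the barycentric coordinates λ^k of Q^k satisfy λ^k_i = 0 for i ≤ k, λ^k_{k+1} < 0, λ^k_i > 0 for i ≥ k+2 (for k < K), and λ^K_i = 0 for i ≤ K, λ^K_i > 0 for i > K. Then the inner products σ_i = ⟨P^i - Q^K, Q^0 - Q^K⟩ satisfy σ_i < 0 for i = 1,...,K and σ_i = 0 for i = K+1,...,m. -/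
local notation "⟪" x ", " y "⟫" => @inner ℝ _ _ x y

lemma proj_orth {E : Type*} [NormedAddCommGroup E] [InnerProductSpace ℝ E]
    (s : AffineSubspace ℝ E) (u q : E) (hq : q ∈ s)
    (hmin : ∀ y ∈ s, dist q u ≤ dist y u)
    {v : E} (hv : v ∈ s.direction) : ⟪q - u, v⟫ = 0 := by
  rcases eq_or_ne v 0 with rfl | hv0
  · simp
  set c : ℝ := ⟪q - u, v⟫ with hc
  have hvpos : (0:ℝ) < ‖v‖^2 := by
    have : 0 < ‖v‖ := norm_pos_iff.mpr hv0
    positivity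
  set t : ℝ := -c / ‖v‖^2 with ht
  have hy : q + t • v ∈ s := by
    have := AffineSubspace.vadd_mem_of_mem_direction (s.direction.smul_mem t hv) hq
    rwa [vadd_eq_add, add_comm] at this
  have h1 := hmin _ hy
  rw [dist_eq_norm, dist_eq_norm] at h1
  have h3 : q + t • v - u = (q - u) + t • v := by abel
  rw [h3] at h1
  have h2 : ‖q - u‖^2 ≤ ‖(q - u) + t • v‖^2 := by
    nlinarith [norm_nonneg ((q - u) + t • v), norm_nonneg (q - u)]
  rw [norm_add_sq_real, real_inner_smul_right, norm_smul, ← hc, Real.norm_eq_abs] at h2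
  have h4 : (0:ℝ) ≤ 2 * (t * c) + t^2 * ‖v‖^2 := by
    nlinarith [sq_abs t]
  have h5 : 2 * (t * c) + t^2 * ‖v‖^2 = -(c^2 / ‖v‖^2) := by
    rw [ht]; field_simp; ring
  rw [h5] at h4
  have h6 : c^2 / ‖v‖^2 ≤ 0 := by linarith
  have h7 := div_mul_cancel₀ (c^2) (ne_of_gt hvpos)
  nlinarith [sq_nonneg c, mul_nonpos_of_nonpos_of_nonneg h6 (le_of_lt hvpos)]


theorem stmt8 (n m K : ℕ) (hK : K + 2 ≤ m)
    (P : Fin m → EuclideanSpace ℝ (Fin n))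
    (hgen : LinearIndependent ℝ
      (fun i : {j : Fin m // j ≠ ⟨0, by omega⟩} => P i.val - P ⟨0, by omega⟩))
    (L : ℕ → AffineSubspace ℝ (EuclideanSpace ℝ (Fin n)))
    (hL : ∀ k, L k = affineSpan ℝ (P '' {i : Fin m | k ≤ (i : ℕ)}))
    (Q : ℕ → EuclideanSpace ℝ (Fin n))
    -- Q 0 is the equidistant point in L 0
    (hQ0mem : Q 0 ∈ L 0)
    (hQ0eq : ∀ i, dist (P i) (Q 0) = dist (P ⟨0, by omega⟩) (Q 0))
    -- Q k is the orthogonal projection of Q (k-1) onto L k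
    (hproj : ∀ k, 1 ≤ k → k ≤ K →
      Q k ∈ L k ∧ ∀ y ∈ L k, dist (Q k) (Q (k - 1)) ≤ dist y (Q (k - 1)))
    -- barycentric coordinates of the Q k about P
    (lam : ℕ → Fin m → ℝ)
    (hbary : ∀ k ≤ K, (∑ i, lam k i) = 1 ∧ Q k = ∑ i, lam k i • P i)
    -- sign pattern: exactly one negative component at each step k < K
    (hsign : ∀ k < K, ∀ i : Fin m,
      ((i : ℕ) < k → lam k i = 0) ∧ ((i : ℕ) = k → lam k i < 0) ∧
      (k < (i : ℕ) → 0 < lam k i))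
    -- all components nonnegative at step K
    (hsignK : ∀ i : Fin m, ((i : ℕ) < K → lam K i = 0) ∧ (K ≤ (i : ℕ) → 0 < lam K i)) :
    ∀ i : Fin m,
      ((i : ℕ) < K → (inner ℝ (P i - Q K) (Q 0 - Q K) : ℝ) < 0) ∧
      (K ≤ (i : ℕ) → (inner ℝ (P i - Q K) (Q 0 - Q K) : ℝ) = 0) := by
  -- basic memberships
  have hPmem : ∀ (k : ℕ) (i : Fin m), k ≤ (i:ℕ) → P i ∈ L k := by
    intro k i hi
    rw [hL]
    exact subset_affineSpan ℝ _ ⟨i, hi, rfl⟩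
  have hmono : ∀ j k : ℕ, j ≤ k → L k ≤ L j := by
    intro j k hjk
    rw [hL, hL]
    exact affineSpan_mono ℝ (Set.image_mono (fun i hi => le_trans hjk hi))
  have hQmem : ∀ k, k ≤ K → Q k ∈ L k := by
    intro k hk
    rcases Nat.eq_zero_or_pos k with rfl | hk1
    · exact hQ0mem
    · exact (hproj k hk1 hk).1
  -- orthogonality of each projection step
  have horth : ∀ k, k < K → ∀ v ∈ (L (k+1)).direction, ⟪Q k - Q (k+1), v⟫ = 0 := by
    intro k hk v hv
    have h := hproj (k+1) (by omega) (by omega)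
    simp only [Nat.add_sub_cancel] at h
    have h2 := proj_orth (L (k+1)) (Q k) (Q (k+1)) h.1 h.2 hv
    have h3 : ⟪-(Q (k+1) - Q k), v⟫ = (0:ℝ) := by rw [inner_neg_left, h2, neg_zero]
    rw [neg_sub] at h3
    exact h3
  -- difference of Q's in directions
  have hQQ : ∀ a b c : ℕ, c ≤ a → c ≤ b → a ≤ K → b ≤ K →
      Q a - Q b ∈ (L c).direction := by
    intro a b c hca hcb haK hbK
    have := AffineSubspace.vsub_mem_direction (hmono c a hca (hQmem a haK))
      (hmono c b hcb (hQmem b hbK))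
    simpa using this
  -- sigma is zero for i ≥ K
  have hsig0 : ∀ i : Fin m, K ≤ (i:ℕ) → ⟪P i - Q K, Q 0 - Q K⟫ = 0 := by
    intro i hi
    have htel : Q 0 - Q K = ∑ k ∈ Finset.range K, (Q k - Q (k+1)) :=
      (Finset.sum_range_sub' Q K).symm
    rw [htel, inner_sum]
    apply Finset.sum_eq_zero
    intro k hk
    rw [Finset.mem_range] at hk
    rw [real_inner_comm]
    apply horth k hk
    apply AffineSubspace.direction_le (hmono (k+1) K hk)
    have := AffineSubspace.vsub_mem_direction (hPmem K i hi) (hQmem K le_rfl)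
    simpa using this
  -- pairwise orthogonality of the steps
  have hdorth : ∀ a b, a < b → b < K → ⟪Q a - Q (a+1), Q b - Q (b+1)⟫ = 0 := by
    intro a b hab hbK
    exact horth a (by omega) _ (hQQ b (b+1) (a+1) (by omega) (by omega) (by omega) (by omega))
  -- t values
  have hQsub : ∀ k, k ≤ K → Q k - Q K = ∑ j ∈ Finset.Ico k K, (Q j - Q (j+1)) := by
    intro k hk
    rw [Finset.sum_Ico_eq_sub _ hk, Finset.sum_range_sub' Q, Finset.sum_range_sub' Q]
    abel
  have htval : ∀ k, k ≤ K → ⟪Q k - Q K, Q 0 - Q K⟫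
      = ∑ j ∈ Finset.Ico k K, ‖Q j - Q (j+1)‖^2 := by
    intro k hk
    rw [hQsub k hk]
    have htel : Q 0 - Q K = ∑ j ∈ Finset.range K, (Q j - Q (j+1)) :=
      (Finset.sum_range_sub' Q K).symm
    rw [htel, sum_inner]
    apply Finset.sum_congr rfl
    intro i hi
    rw [Finset.mem_Ico] at hi
    rw [inner_sum]
    rw [Finset.sum_eq_single_of_mem i (Finset.mem_range.mpr hi.2)]
    · exact real_inner_self_eq_norm_sq _
    · intro b hb hbi
      rw [Finset.mem_range] at hb
      rcases lt_or_gt_of_ne hbi with h | h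
      · rw [real_inner_comm]
        exact hdorth b i h hi.2
      · exact hdorth i b h hb
  -- Q (K-1) ≠ Q K via barycentric uniqueness
  have hne : 1 ≤ K → Q (K-1) - Q K ≠ 0 := by
    intro hK1 h0
    have hQeq : Q (K-1) = Q K := by rwa [sub_eq_zero] at h0
    set c : Fin m → ℝ := fun i => lam (K-1) i - lam K i with hcdef
    have hb1 := hbary (K-1) (by omega)
    have hb2 := hbary K le_rfl
    have hsum : ∑ i, c i = 0 := by
      simp only [hcdef, Finset.sum_sub_distrib, hb1.1, hb2.1, sub_self]
    have hcomb : ∑ i, c i • P i = 0 := by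
      simp only [hcdef, sub_smul]
      rw [Finset.sum_sub_distrib, ← hb1.2, ← hb2.2, hQeq, sub_self]
    set i0 : Fin m := ⟨0, by omega⟩ with hi0
    have hzero : ∀ i : Fin m, i ≠ i0 → c i = 0 := by
      have hsum2 : ∑ i : {j : Fin m // j ≠ i0}, c i.val • (P i.val - P i0) = 0 := by
        rw [← Finset.sum_subtype (Finset.univ.erase i0) (by simp) (fun i => c i • (P i - P i0))]
        rw [Finset.sum_erase _ (by simp)]
        simp only [smul_sub]
        rw [Finset.sum_sub_distrib, hcomb, ← Finset.sum_smul, hsum, zero_smul, sub_self]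
      intro i hi
      exact Fintype.linearIndependent_iff.mp hgen (fun i => c i.val) hsum2 ⟨i, hi⟩
    have hall : ∀ i : Fin m, c i = 0 := by
      intro i
      by_cases h : i = i0
      · have h2 : ∑ j, c j = c i0 := Finset.sum_eq_single_of_mem i0 (Finset.mem_univ _)
          (fun b _ hb => hzero b hb)
        rw [hsum] at h2
        rw [h]
        exact h2.symm
      · exact hzero i h
    have hK1m : K - 1 < m := by omega
    have h1 : lam (K-1) ⟨K-1, hK1m⟩ < 0 := (hsign (K-1) (by omega) ⟨K-1, hK1m⟩).2.1 rfl
    have h2 : lam K ⟨K-1, hK1m⟩ = 0 := (hsignK ⟨K-1, hK1m⟩).1 (by simp; omega)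
    have h3 := hall ⟨K-1, hK1m⟩
    simp only [hcdef] at h3
    linarith
  -- positivity of t k
  have htpos : ∀ k, k < K → (0:ℝ) < ⟪Q k - Q K, Q 0 - Q K⟫ := by
    intro k hk
    rw [htval k (le_of_lt hk)]
    have hmem : (K-1) ∈ Finset.Ico k K := by rw [Finset.mem_Ico]; omega
    have hpos : (0:ℝ) < ‖Q (K-1) - Q ((K-1)+1)‖^2 := by
      have h1 : (K-1)+1 = K := by omega
      rw [h1]
      have h2 := hne (by omega)
      exact pow_pos (norm_pos_iff.mpr h2) 2
    calc (0:ℝ) < ‖Q (K-1) - Q ((K-1)+1)‖^2 := hpos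
      _ ≤ ∑ j ∈ Finset.Ico k K, ‖Q j - Q (j+1)‖^2 :=
        Finset.single_le_sum (f := fun j => ‖Q j - Q (j+1)‖^2) (fun i _ => by positivity) hmem
  -- relation between lam and sigma
  have hrel : ∀ k, k ≤ K →
      ∑ i, lam k i * ⟪P i - Q K, Q 0 - Q K⟫ = ⟪Q k - Q K, Q 0 - Q K⟫ := by
    intro k hk
    have hb := hbary k hk
    have hQkdiff : Q k - Q K = ∑ i, lam k i • (P i - Q K) := by
      simp only [smul_sub]
      rw [Finset.sum_sub_distrib, ← hb.2, ← Finset.sum_smul, hb.1, one_smul]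
    rw [hQkdiff, sum_inner]
    apply Finset.sum_congr rfl
    intro i _
    rw [real_inner_smul_left]
  -- main downward induction
  have hmain : ∀ j : ℕ, ∀ k, k < K → K - k ≤ j → ∀ (hkm : k < m),
      ⟪P ⟨k, hkm⟩ - Q K, Q 0 - Q K⟫ < 0 := by
    intro j
    induction j with
    | zero => intro k hk hj _; omega
    | succ j ih =>
      intro k hk hj hkm
      have hrelk := hrel k (le_of_lt hk)
      have tpos := htpos k hk
      set i1 : Fin m := ⟨k, hkm⟩ with hi1
      have hsplit : lam k i1 * ⟪P i1 - Q K, Q 0 - Q K⟫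
          + ∑ i ∈ Finset.univ.erase i1, lam k i * ⟪P i - Q K, Q 0 - Q K⟫
          = ∑ i, lam k i * ⟪P i - Q K, Q 0 - Q K⟫ :=
        Finset.add_sum_erase _ (fun i => lam k i * ⟪P i - Q K, Q 0 - Q K⟫) (Finset.mem_univ i1)
      have hrest : ∑ i ∈ Finset.univ.erase i1, lam k i * ⟪P i - Q K, Q 0 - Q K⟫ ≤ 0 := by
        apply Finset.sum_nonpos
        intro i hi
        have hine : i ≠ i1 := (Finset.mem_erase.mp hi).1
        rcases lt_trichotomy (i : ℕ) k with h | h | h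
        · rw [(hsign k hk i).1 h, zero_mul]
        · exact absurd (Fin.ext h) hine
        · rcases le_or_gt K (i : ℕ) with hKi | hKi
          · rw [hsig0 i hKi, mul_zero]
          · have hlam : 0 < lam k i := (hsign k hk i).2.2 h
            have hsg : ⟪P ⟨(i:ℕ), i.isLt⟩ - Q K, Q 0 - Q K⟫ < 0 := ih (i:ℕ) hKi (by omega) i.isLt
            have hsg2 : ⟪P i - Q K, Q 0 - Q K⟫ < 0 := by simpa using hsg
            nlinarith
      have hlamneg : lam k i1 < 0 := (hsign k hk i1).2.1 rfl
      by_contra hcon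
      push_neg at hcon
      nlinarith [mul_nonpos_of_nonpos_of_nonneg (le_of_lt hlamneg) hcon]
  intro i
  constructor
  · intro hiK
    have := hmain (K - (i:ℕ)) (i:ℕ) hiK le_rfl i.isLt
    simpa using this
  · exact hsig0 i
end

section
/- Let P^1,P^2,P^3 ∈ R^n be affinely independent, Q^0 their circumcenter in the affine hull, with barycentric coordinates (λ^0_1,λ^0_2,λ^0_3). If λ^0_1 < 0, λ^0_2 ≥ 0, λ^0_3 ≥ 0, then the midpoint Q^1 of the segment P^2P^3 is the center of the smallest enclosing circle of {P^1,P^2,P^3}; in particular d(P^1,Q^1) < d(P^2,Q^1) = d(P^3,Q^1). -/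
open RealInnerProductSpace

set_option maxHeartbeats 1000000 in
theorem stmt11 (n : ℕ) (P1 P2 P3 : EuclideanSpace ℝ (Fin n))
    (hindep : AffineIndependent ℝ ![P1, P2, P3])
    (Q0 : EuclideanSpace ℝ (Fin n))
    (hQ0mem : Q0 ∈ affineSpan ℝ ({P1, P2, P3} : Set (EuclideanSpace ℝ (Fin n))))
    (hQ0eq : dist P1 Q0 = dist P2 Q0 ∧ dist P2 Q0 = dist P3 Q0)
    (lam : Fin 3 → ℝ) (hsum : lam 0 + lam 1 + lam 2 = 1)
    (hbary : Q0 = lam 0 • P1 + lam 1 • P2 + lam 2 • P3)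
    (h1 : lam 0 < 0) (h2 : 0 ≤ lam 1) (h3 : 0 ≤ lam 2) :
    dist P1 (midpoint ℝ P2 P3) < dist P2 (midpoint ℝ P2 P3) ∧
    dist P2 (midpoint ℝ P2 P3) = dist P3 (midpoint ℝ P2 P3) ∧
    ∀ Q : EuclideanSpace ℝ (Fin n),
      dist P2 (midpoint ℝ P2 P3) ≤ max (dist P1 Q) (max (dist P2 Q) (dist P3 Q)) := by
  have hinj := hindep.injective
  have hP21 : P2 ≠ P1 := fun h => (by decide : (1 : Fin 3) ≠ 0) (hinj (show ![P1,P2,P3] 1 = ![P1,P2,P3] 0 by simpa using h))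
  have hP31 : P3 ≠ P1 := fun h => (by decide : (2 : Fin 3) ≠ 0) (hinj (show ![P1,P2,P3] 2 = ![P1,P2,P3] 0 by simpa using h))
  have hP23 : P2 ≠ P3 := fun h => (by decide : (1 : Fin 3) ≠ 2) (hinj (show ![P1,P2,P3] 1 = ![P1,P2,P3] 2 by simpa using h))
  set M := midpoint ℝ P2 P3 with hM
  set b : EuclideanSpace ℝ (Fin n) := P2 - P1 with hb
  set c : EuclideanSpace ℝ (Fin n) := P3 - P1 with hc
  have hbne : b ≠ 0 := sub_ne_zero.mpr hP21
  have hcne : c ≠ 0 := sub_ne_zero.mpr hP31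
  have hB : 0 < ⟪b, b⟫ := by
    rw [real_inner_self_eq_norm_sq]; exact pow_pos (norm_pos_iff.mpr hbne) 2
  have hC : 0 < ⟪c, c⟫ := by
    rw [real_inner_self_eq_norm_sq]; exact pow_pos (norm_pos_iff.mpr hcne) 2
  have hbcsub : b - c = P2 - P3 := by rw [hb, hc]; abel
  have hBC : 0 < ⟪b, b⟫ - 2 * ⟪b, c⟫ + ⟪c, c⟫ := by
    have h0 : (0:ℝ) < ⟪b - c, b - c⟫ := by
      rw [real_inner_self_eq_norm_sq]
      exact pow_pos (norm_pos_iff.mpr (by rw [hbcsub]; exact sub_ne_zero.mpr hP23)) 2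
    have hexp : ⟪b - c, b - c⟫ = ⟪b, b⟫ - 2 * ⟪b, c⟫ + ⟪c, c⟫ := by
      simp only [inner_sub_left, inner_sub_right, real_inner_comm c b]
      ring
    linarith [hexp ▸ h0]
  have hlam0 : lam 0 = 1 - lam 1 - lam 2 := by linarith
  have hq : Q0 - P1 = lam 1 • b + lam 2 • c := by
    rw [hbary, hlam0, hb, hc]; module
  -- circumcenter equations
  have key : ∀ v : EuclideanSpace ℝ (Fin n), dist P1 Q0 = dist (P1 + v) Q0 →
      2 * ⟪v, Q0 - P1⟫ = ⟪v, v⟫ := by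
    intro v hdist
    have h2 : ⟪P1 - Q0, P1 - Q0⟫ = ⟪P1 + v - Q0, P1 + v - Q0⟫ := by
      rw [real_inner_self_eq_norm_sq, real_inner_self_eq_norm_sq, ← dist_eq_norm, ← dist_eq_norm, hdist]
    have hre : P1 + v - Q0 = v - (Q0 - P1) := by abel
    have hre2 : P1 - Q0 = -(Q0 - P1) := by abel
    rw [hre, hre2] at h2
    generalize Q0 - P1 = q at h2
    simp only [inner_sub_left, inner_sub_right, inner_neg_left, inner_neg_right, neg_neg] at h2
    linarith [real_inner_comm q v, h2]
  have e1 : 2 * ⟪b, Q0 - P1⟫ = ⟪b, b⟫ := by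
    apply key
    rw [show P1 + b = P2 by rw [hb]; abel]
    exact hQ0eq.1
  have e2 : 2 * ⟪c, Q0 - P1⟫ = ⟪c, c⟫ := by
    apply key
    rw [show P1 + c = P3 by rw [hc]; abel]
    exact hQ0eq.1.trans hQ0eq.2
  have hbq : ⟪b, Q0 - P1⟫ = lam 1 * ⟪b, b⟫ + lam 2 * ⟪b, c⟫ := by
    rw [hq]; simp only [inner_add_right, real_inner_smul_right]
  have hcq : ⟪c, Q0 - P1⟫ = lam 1 * ⟪b, c⟫ + lam 2 * ⟪c, c⟫ := by
    rw [hq]; simp only [inner_add_right, real_inner_smul_right, real_inner_comm c b]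
  rw [hbq] at e1
  rw [hcq] at e2
  -- Cauchy-Schwarz
  have hCS : ⟪b, c⟫ * ⟪b, c⟫ ≤ ⟪b, b⟫ * ⟪c, c⟫ := real_inner_mul_inner_self_le b c
  -- the key identity
  have hId : 2 * lam 0 * (⟪b, b⟫ * ⟪c, c⟫ - ⟪b, c⟫ * ⟪b, c⟫)
      = ⟪b, c⟫ * (⟪b, b⟫ + ⟪c, c⟫ - 2 * ⟪b, c⟫) := by
    rw [hlam0]
    linear_combination (⟪b, c⟫ - ⟪c, c⟫) * e1 + (⟪b, c⟫ - ⟪b, b⟫) * e2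
  have hD : ⟪b, c⟫ < 0 := by
    by_contra hcon
    push_neg at hcon
    have hXnn : 0 ≤ ⟪b, b⟫ * ⟪c, c⟫ - ⟪b, c⟫ * ⟪b, c⟫ := by linarith
    have hX0 : ⟪b, b⟫ * ⟪c, c⟫ - ⟪b, c⟫ * ⟪b, c⟫ = 0 := by
      rcases hXnn.eq_or_lt' with h | h
      · linarith
      · exfalso
        have ht : 0 ≤ ⟪b, c⟫ * (⟪b, b⟫ + ⟪c, c⟫ - 2 * ⟪b, c⟫) := mul_nonneg hcon (by linarith)
        nlinarith [mul_pos (neg_pos.mpr h1) h]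
    have hD0 : ⟪b, c⟫ = 0 := by
      have hz : ⟪b, c⟫ * (⟪b, b⟫ + ⟪c, c⟫ - 2 * ⟪b, c⟫) = 0 := by rw [← hId, hX0]; ring
      rcases mul_eq_zero.mp hz with h | h
      · exact h
      · linarith
    rw [hD0] at hX0
    nlinarith [mul_pos hB hC]
  -- distances to the midpoint
  have hP1M : P1 - M = (-(1/2 : ℝ)) • (b + c) := by
    rw [hM, hb, hc, midpoint_eq_smul_add, invOf_eq_inv]; module
  have hP2M : P2 - M = ((1/2 : ℝ)) • (b - c) := by
    rw [hM, hb, hc, midpoint_eq_smul_add, invOf_eq_inv]; module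
  have hd1 : dist P1 M ^ 2 = (⟪b, b⟫ + 2 * ⟪b, c⟫ + ⟪c, c⟫) / 4 := by
    rw [dist_eq_norm, ← real_inner_self_eq_norm_sq, hP1M]
    simp only [real_inner_smul_left, real_inner_smul_right, inner_add_left, inner_add_right,
      real_inner_comm c b]
    ring
  have hd2 : dist P2 M ^ 2 = (⟪b, b⟫ - 2 * ⟪b, c⟫ + ⟪c, c⟫) / 4 := by
    rw [dist_eq_norm, ← real_inner_self_eq_norm_sq, hP2M]
    simp only [real_inner_smul_left, real_inner_smul_right, inner_sub_left, inner_sub_right,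
      real_inner_comm c b]
    ring
  have hlt : dist P1 M < dist P2 M := by
    nlinarith [dist_nonneg (x := P1) (y := M), dist_nonneg (x := P2) (y := M)]
  refine ⟨hlt, ?_, ?_⟩
  · rw [hM]
    exact dist_left_midpoint_eq_dist_right_midpoint P2 P3
  · intro Q
    have h23 : dist P2 P3 ≤ dist P2 Q + dist Q P3 := dist_triangle _ _ _
    have hm2 : dist P2 M = dist P2 P3 / 2 := by
      rw [hM, dist_left_midpoint (𝕜 := ℝ), Real.norm_ofNat]
      ring
    have ha : dist P2 Q ≤ max (dist P1 Q) (max (dist P2 Q) (dist P3 Q)) :=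
      le_max_of_le_right (le_max_left _ _)
    have hb' : dist P3 Q ≤ max (dist P1 Q) (max (dist P2 Q) (dist P3 Q)) :=
      le_max_of_le_right (le_max_right _ _)
    rw [dist_comm Q P3] at h23
    linarith
end

section
/- Let P^1,...,P^4 ∈ R^n be in general position with equidistant point Q^0 whose barycentric coordinates satisfy λ^0_1 < 0 and λ^0_2 < 0. Let Q^{1(1)} = π(Q^0 | aff(P^2,P^3,P^4)) and Q^{1(2)} = π(Q^0 | aff(P^1,P^3,P^4)) with barycentric coordinates λ^{1(1)}, λ^{1(2)} about P^1,...,P^4, and let σ^{1(1)}_1 = ⟨P^1 - Q^{1(1)}, Q^0 - Q^{1(1)}⟩, σ^{1(2)}_2 = ⟨P^2 - Q^{1(2)}, Q^0 - Q^{1(2)}⟩. Then λ^{1(2)}_1 σ^{1(1)}_1 + λ^{1(1)}_2 σ^{1(2)}_2 = ‖Q^{1(1)} - Q^{1(2)}‖² > 0; moreover σ^{1(1)}_1 < 0 and σ^{1(2)}_2 < 0, so at least one of λ^{1(2)}_1 < 0 or λ^{1(1)}_2 < 0 holds. -/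
lemma aux_inner_zero {E : Type*} [NormedAddCommGroup E] [InnerProductSpace ℝ E]
    (v w : E) (h : ∀ t : ℝ, ‖v‖ ≤ ‖v - t • w‖) : (inner ℝ v w : ℝ) = 0 := by
  by_cases hw : w = 0
  · simp [hw]
  · have hwn : (0:ℝ) < ‖w‖ := norm_pos_iff.mpr hw
    set c : ℝ := inner ℝ v w with hc
    set t : ℝ := c / ‖w‖ ^ 2 with htdef
    have hct : c = t * ‖w‖ ^ 2 := by rw [htdef, div_mul_cancel₀ _ (pow_ne_zero 2 hwn.ne')]
    have ht := h t
    have hsq : ‖v‖ ^ 2 ≤ ‖v - t • w‖ ^ 2 := pow_le_pow_left₀ (norm_nonneg _) ht 2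
    rw [norm_sub_sq_real, real_inner_smul_right, norm_smul] at hsq
    have habs : (‖t‖ * ‖w‖) ^ 2 = t ^ 2 * ‖w‖ ^ 2 := by
      rw [mul_pow, Real.norm_eq_abs, sq_abs]
    rw [habs] at hsq
    have hc2 : c ^ 2 ≤ 0 := by nlinarith [sq_nonneg t, sq_nonneg ‖w‖]
    nlinarith [sq_nonneg c]

theorem stmt12 (n : ℕ) (P : Fin 4 → EuclideanSpace ℝ (Fin n))
    (hgen : LinearIndependent ℝ (fun i : Fin 3 => P i.succ - P 0))
    (Q0 : EuclideanSpace ℝ (Fin n))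
    -- Q0 is the equidistant point in the affine hull of the P i
    (hQ0mem : Q0 ∈ affineSpan ℝ (Set.range P))
    (hQ0eq : ∀ i, dist (P i) Q0 = dist (P 0) Q0)
    -- barycentric coordinates of Q0, with first two components negative
    (lam0 : Fin 4 → ℝ) (hlam0sum : (∑ i, lam0 i) = 1) (hlam0 : Q0 = ∑ i, lam0 i • P i)
    (h01 : lam0 0 < 0) (h02 : lam0 1 < 0)
    -- Q11 is the orthogonal projection of Q0 onto aff(P^2,P^3,P^4)
    (Q11 : EuclideanSpace ℝ (Fin n))
    (hQ11mem : Q11 ∈ affineSpan ℝ (P '' {i | i ≠ 0}))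
    (hQ11min : ∀ y ∈ affineSpan ℝ (P '' {i | i ≠ 0}), dist Q11 Q0 ≤ dist y Q0)
    -- Q12 is the orthogonal projection of Q0 onto aff(P^1,P^3,P^4)
    (Q12 : EuclideanSpace ℝ (Fin n))
    (hQ12mem : Q12 ∈ affineSpan ℝ (P '' {i | i ≠ 1}))
    (hQ12min : ∀ y ∈ affineSpan ℝ (P '' {i | i ≠ 1}), dist Q12 Q0 ≤ dist y Q0)
    -- barycentric coordinates of Q11 and Q12 about the P i
    (lam11 lam12 : Fin 4 → ℝ)
    (hlam11sum : (∑ i, lam11 i) = 1) (hlam11 : Q11 = ∑ i, lam11 i • P i)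
    (hlam12sum : (∑ i, lam12 i) = 1) (hlam12 : Q12 = ∑ i, lam12 i • P i) :
    lam12 0 * (inner ℝ (P 0 - Q11) (Q0 - Q11) : ℝ) +
        lam11 1 * (inner ℝ (P 1 - Q12) (Q0 - Q12) : ℝ) = ‖Q11 - Q12‖ ^ 2 ∧
    0 < ‖Q11 - Q12‖ ^ 2 ∧
    (inner ℝ (P 0 - Q11) (Q0 - Q11) : ℝ) < 0 ∧
    (inner ℝ (P 1 - Q12) (Q0 - Q12) : ℝ) < 0 ∧
    (lam12 0 < 0 ∨ lam11 1 < 0) := by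
  classical
  -- uniqueness of affine representations
  have huniq : ∀ w : Fin 4 → ℝ, (∑ i, w i) = 0 → (∑ i, w i • P i) = 0 → ∀ i, w i = 0 := by
    intro w hs hz
    rw [Fin.sum_univ_four] at hs hz
    have hsum : ∑ i : Fin 3, (fun j => w j.succ) i • (P i.succ - P 0) = 0 := by
      rw [Fin.sum_univ_three]
      have key : w 1 • (P 1 - P 0) + w 2 • (P 2 - P 0) + w 3 • (P 3 - P 0)
          = (w 0 • P 0 + w 1 • P 1 + w 2 • P 2 + w 3 • P 3)
            - (w 0 + w 1 + w 2 + w 3) • P 0 := by module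
      show w 1 • (P 1 - P 0) + w 2 • (P 2 - P 0) + w 3 • (P 3 - P 0) = 0
      rw [key, hz, hs]; simp
    have h3 := Fintype.linearIndependent_iff.mp hgen (fun j => w j.succ) hsum
    have w1 : w 1 = 0 := h3 0
    have w2 : w 2 = 0 := h3 1
    have w3 : w 3 = 0 := h3 2
    have w0 : w 0 = 0 := by linarith
    intro i; fin_cases i <;> assumption
  have hco : ∀ lam mu : Fin 4 → ℝ, (∑ i, lam i) = 1 → (∑ i, mu i) = 1 →
      (∑ i, lam i • P i) = (∑ i, mu i • P i) → ∀ i, lam i = mu i := by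
    intro lam mu hl hm he i
    have h := huniq (fun i => lam i - mu i)
      (by rw [Finset.sum_sub_distrib, hl, hm]; ring)
      (by simp only [sub_smul, Finset.sum_sub_distrib, he, sub_self])
    have := h i
    linarith
  -- zero coordinates of the projections
  obtain ⟨w, hwsum, hwrep⟩ : ∃ w : Fin 3 → ℝ, w 0 + w 1 + w 2 = 1 ∧
      Q11 = w 0 • P 1 + w 1 • P 2 + w 2 • P 3 := by
    have hset : P '' {i : Fin 4 | i ≠ 0} = Set.range (P ∘ (0:Fin 4).succAbove) := by
      rw [Set.range_comp, Fin.range_succAbove]; ext i; simp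
    rw [hset] at hQ11mem
    obtain ⟨w, h1, h2⟩ := eq_affineCombination_of_mem_affineSpan_of_fintype hQ11mem
    refine ⟨w, ?_, ?_⟩
    · rw [Fin.sum_univ_three] at h1; exact h1
    · rw [h2, Finset.univ.affineCombination_eq_linear_combination _ _ h1,
        Fin.sum_univ_three]
      rfl
  obtain ⟨u, husum, hurep⟩ : ∃ u : Fin 3 → ℝ, u 0 + u 1 + u 2 = 1 ∧
      Q12 = u 0 • P 0 + u 1 • P 2 + u 2 • P 3 := by
    have hset : P '' {i : Fin 4 | i ≠ 1} = Set.range (P ∘ (1:Fin 4).succAbove) := by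
      rw [Set.range_comp, Fin.range_succAbove]; ext i; simp
    rw [hset] at hQ12mem
    obtain ⟨u, h1, h2⟩ := eq_affineCombination_of_mem_affineSpan_of_fintype hQ12mem
    refine ⟨u, ?_, ?_⟩
    · rw [Fin.sum_univ_three] at h1; exact h1
    · rw [h2, Finset.univ.affineCombination_eq_linear_combination _ _ h1,
        Fin.sum_univ_three]
      rfl
  have h110 : lam11 0 = 0 := by
    have := hco lam11 ![0, w 0, w 1, w 2] hlam11sum
      (by rw [Fin.sum_univ_four]; simp; linarith)
      (by rw [← hlam11, hwrep, Fin.sum_univ_four]; simp)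
    simpa using this 0
  have h121 : lam12 1 = 0 := by
    have := hco lam12 ![u 0, 0, u 1, u 2] hlam12sum
      (by rw [Fin.sum_univ_four]; simp; linarith)
      (by rw [← hlam12, hurep, Fin.sum_univ_four]; simp)
    simpa using this 1
  -- orthogonality from the minimization property
  have horth : ∀ s : Set (Fin 4), ∀ Q : EuclideanSpace ℝ (Fin n),
      Q ∈ affineSpan ℝ (P '' s) →
      (∀ y ∈ affineSpan ℝ (P '' s), dist Q Q0 ≤ dist y Q0) →
      ∀ i ∈ s, ∀ j ∈ s, (inner ℝ (Q0 - Q) (P i - P j) : ℝ) = 0 := by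
    intro s Q hQmem hQmin i hi j hj
    apply aux_inner_zero
    intro t
    have hy : t • (P i - P j) + Q ∈ affineSpan ℝ (P '' s) := by
      have h1 : P i ∈ affineSpan ℝ (P '' s) := subset_affineSpan _ _ ⟨i, hi, rfl⟩
      have h2 : P j ∈ affineSpan ℝ (P '' s) := subset_affineSpan _ _ ⟨j, hj, rfl⟩
      have := AffineSubspace.smul_vsub_vadd_mem _ t h1 h2 hQmem
      simpa [vsub_eq_sub, vadd_eq_add] using this
    have hle := hQmin _ hy
    rw [dist_eq_norm, dist_eq_norm] at hle
    calc ‖Q0 - Q‖ = ‖Q - Q0‖ := norm_sub_rev _ _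
      _ ≤ ‖t • (P i - P j) + Q - Q0‖ := hle
      _ = ‖(Q0 - Q) - t • (P i - P j)‖ := by
          rw [show t • (P i - P j) + Q - Q0 = -((Q0 - Q) - t • (P i - P j)) by module,
            norm_neg]
  obtain ⟨s1, hs1def⟩ : ∃ s : ℝ, s = (inner ℝ (P 0 - P 1) (Q0 - Q11) : ℝ) := ⟨_, rfl⟩
  obtain ⟨s2, hs2def⟩ : ∃ s : ℝ, s = (inner ℝ (P 1 - P 0) (Q0 - Q12) : ℝ) := ⟨_, rfl⟩
  have hz1 : ∀ c0 c1 c2 c3 : ℝ, c0 + c1 + c2 + c3 = 0 →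
      (inner ℝ (c0 • P 0 + c1 • P 1 + c2 • P 2 + c3 • P 3) (Q0 - Q11) : ℝ) = c0 * s1 := by
    intro c0 c1 c2 c3 h
    have e : c0 • P 0 + c1 • P 1 + c2 • P 2 + c3 • P 3
        = c0 • (P 0 - P 1) + c2 • (P 2 - P 1) + c3 • (P 3 - P 1) := by
      have hc1 : c1 = -(c0 + c2 + c3) := by linarith
      rw [hc1]; module
    have o2 := horth {i | i ≠ 0} Q11 hQ11mem hQ11min 2 (by simp) 1 (by simp)
    have o3 := horth {i | i ≠ 0} Q11 hQ11mem hQ11min 3 (by simp) 1 (by simp)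
    rw [real_inner_comm] at o2 o3
    rw [e, inner_add_left, inner_add_left, real_inner_smul_left, real_inner_smul_left,
      real_inner_smul_left, o2, o3, ← hs1def]
    ring
  have hz2 : ∀ c0 c1 c2 c3 : ℝ, c0 + c1 + c2 + c3 = 0 →
      (inner ℝ (c0 • P 0 + c1 • P 1 + c2 • P 2 + c3 • P 3) (Q0 - Q12) : ℝ) = c1 * s2 := by
    intro c0 c1 c2 c3 h
    have e : c0 • P 0 + c1 • P 1 + c2 • P 2 + c3 • P 3
        = c1 • (P 1 - P 0) + c2 • (P 2 - P 0) + c3 • (P 3 - P 0) := by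
      have hc0 : c0 = -(c1 + c2 + c3) := by linarith
      rw [hc0]; module
    have o2 := horth {i | i ≠ 1} Q12 hQ12mem hQ12min 2 (by simp) 0 (by simp)
    have o3 := horth {i | i ≠ 1} Q12 hQ12mem hQ12min 3 (by simp) 0 (by simp)
    rw [real_inner_comm] at o2 o3
    rw [e, inner_add_left, inner_add_left, real_inner_smul_left, real_inner_smul_left,
      real_inner_smul_left, o2, o3, ← hs2def]
    ring
  have hlam0sum' : lam0 0 + lam0 1 + lam0 2 + lam0 3 = 1 := by
    rw [← Fin.sum_univ_four]; exact hlam0sum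
  have hlam11sum' : lam11 0 + lam11 1 + lam11 2 + lam11 3 = 1 := by
    rw [← Fin.sum_univ_four]; exact hlam11sum
  have hlam12sum' : lam12 0 + lam12 1 + lam12 2 + lam12 3 = 1 := by
    rw [← Fin.sum_univ_four]; exact hlam12sum
  -- sigma1 = s1
  have hσ1 : (inner ℝ (P 0 - Q11) (Q0 - Q11) : ℝ) = s1 := by
    have e : P 0 - Q11 = (1 - lam11 0) • P 0 + (-lam11 1) • P 1 +
        (-lam11 2) • P 2 + (-lam11 3) • P 3 := by
      rw [hlam11, Fin.sum_univ_four]; module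
    rw [e, hz1 _ _ _ _ (by linarith), h110]; ring
  have hσ2 : (inner ℝ (P 1 - Q12) (Q0 - Q12) : ℝ) = s2 := by
    have e : P 1 - Q12 = (-lam12 0) • P 0 + (1 - lam12 1) • P 1 +
        (-lam12 2) • P 2 + (-lam12 3) • P 3 := by
      rw [hlam12, Fin.sum_univ_four]; module
    rw [e, hz2 _ _ _ _ (by linarith), h121]; ring
  -- norms of the projection vectors
  have hv1 : (inner ℝ (Q0 - Q11) (Q0 - Q11) : ℝ) = lam0 0 * s1 := by
    have e : Q0 - Q11 = (lam0 0 - lam11 0) • P 0 + (lam0 1 - lam11 1) • P 1 +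
        (lam0 2 - lam11 2) • P 2 + (lam0 3 - lam11 3) • P 3 := by
      rw [hlam0, hlam11, Fin.sum_univ_four, Fin.sum_univ_four]; module
    nth_rewrite 1 [e]
    rw [hz1 _ _ _ _ (by linarith), h110]; ring
  have hv2 : (inner ℝ (Q0 - Q12) (Q0 - Q12) : ℝ) = lam0 1 * s2 := by
    have e : Q0 - Q12 = (lam0 0 - lam12 0) • P 0 + (lam0 1 - lam12 1) • P 1 +
        (lam0 2 - lam12 2) • P 2 + (lam0 3 - lam12 3) • P 3 := by
      rw [hlam0, hlam12, Fin.sum_univ_four, Fin.sum_univ_four]; module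
    nth_rewrite 1 [e]
    rw [hz2 _ _ _ _ (by linarith), h121]; ring
  -- s1 < 0 and s2 < 0
  have hQ0ne1 : Q0 ≠ Q11 := by
    intro h
    have := hco lam0 lam11 hlam0sum hlam11sum (by rw [← hlam0, ← hlam11, h]) 0
    rw [h110] at this; linarith
  have hQ0ne2 : Q0 ≠ Q12 := by
    intro h
    have := hco lam0 lam12 hlam0sum hlam12sum (by rw [← hlam0, ← hlam12, h]) 1
    rw [h121] at this; linarith
  have hv1pos : 0 < (inner ℝ (Q0 - Q11) (Q0 - Q11) : ℝ) := by
    rw [real_inner_self_eq_norm_sq]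
    exact pow_pos (norm_pos_iff.mpr (sub_ne_zero.mpr hQ0ne1)) 2
  have hv2pos : 0 < (inner ℝ (Q0 - Q12) (Q0 - Q12) : ℝ) := by
    rw [real_inner_self_eq_norm_sq]
    exact pow_pos (norm_pos_iff.mpr (sub_ne_zero.mpr hQ0ne2)) 2
  have hs1neg : s1 < 0 := by
    have hpos : 0 < lam0 0 * s1 := hv1 ▸ hv1pos
    rcases lt_trichotomy s1 0 with h | h | h
    · exact h
    · exfalso; rw [h, mul_zero] at hpos; exact lt_irrefl _ hpos
    · exfalso; have := mul_neg_of_neg_of_pos h01 h; linarith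
  have hs2neg : s2 < 0 := by
    have hpos : 0 < lam0 1 * s2 := hv2 ▸ hv2pos
    rcases lt_trichotomy s2 0 with h | h | h
    · exact h
    · exfalso; rw [h, mul_zero] at hpos; exact lt_irrefl _ hpos
    · exfalso; have := mul_neg_of_neg_of_pos h02 h; linarith
  -- Q11 ≠ Q12
  have hne : Q11 ≠ Q12 := by
    intro h
    have : s1 = -s2 := by
      rw [hs1def, hs2def, h, show (P 0 - P 1 : EuclideanSpace ℝ (Fin n))
        = -(P 1 - P 0) by module, inner_neg_left]
    linarith
  have hnormpos : 0 < ‖Q11 - Q12‖ ^ 2 :=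
    pow_pos (norm_pos_iff.mpr (sub_ne_zero.mpr hne)) 2
  -- the inner products with the difference
  have hd1 : (inner ℝ (Q11 - Q12) (Q0 - Q11) : ℝ) = -(lam12 0) * s1 := by
    have e : Q11 - Q12 = (lam11 0 - lam12 0) • P 0 + (lam11 1 - lam12 1) • P 1 +
        (lam11 2 - lam12 2) • P 2 + (lam11 3 - lam12 3) • P 3 := by
      rw [hlam11, hlam12, Fin.sum_univ_four, Fin.sum_univ_four]; module
    rw [e, hz1 _ _ _ _ (by linarith), h110]; ring
  have hd2 : (inner ℝ (Q11 - Q12) (Q0 - Q12) : ℝ) = lam11 1 * s2 := by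
    have e : Q11 - Q12 = (lam11 0 - lam12 0) • P 0 + (lam11 1 - lam12 1) • P 1 +
        (lam11 2 - lam12 2) • P 2 + (lam11 3 - lam12 3) • P 3 := by
      rw [hlam11, hlam12, Fin.sum_univ_four, Fin.sum_univ_four]; module
    rw [e, hz2 _ _ _ _ (by linarith), h121]; ring
  -- the main identity
  have hmain : lam12 0 * (inner ℝ (P 0 - Q11) (Q0 - Q11) : ℝ) +
      lam11 1 * (inner ℝ (P 1 - Q12) (Q0 - Q12) : ℝ) = ‖Q11 - Q12‖ ^ 2 := by
    rw [hσ1, hσ2]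
    have expand : (inner ℝ (Q11 - Q12) (Q11 - Q12) : ℝ)
        = -(inner ℝ (Q11 - Q12) (Q0 - Q11) : ℝ) + (inner ℝ (Q11 - Q12) (Q0 - Q12) : ℝ) := by
      rw [← inner_neg_right, ← inner_add_right,
        show -(Q0 - Q11) + (Q0 - Q12) = Q11 - Q12 by module]
    have := real_inner_self_eq_norm_sq (Q11 - Q12)
    rw [← this, expand, hd1, hd2]; ring
  refine ⟨hmain, hnormpos, ?_, ?_, ?_⟩
  · rw [hσ1]; exact hs1neg
  · rw [hσ2]; exact hs2neg
  · by_contra h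
    push_neg at h
    obtain ⟨ha, hb⟩ := h
    have hm1 : lam12 0 * s1 ≤ 0 := mul_nonpos_of_nonneg_of_nonpos ha hs1neg.le
    have hm2 : lam11 1 * s2 ≤ 0 := mul_nonpos_of_nonneg_of_nonpos hb hs2neg.le
    rw [hσ1, hσ2] at hmain
    linarith [hmain, hnormpos]
end

section
/- (Pythagorean theorem in Δ^n) For P, Q, R ∈ Δ^n, the mixed inner product (P - Q, R ⊖ Q) is positive, zero, or negative if and only if D(P‖Q) + D(Q‖R) is respectively greater than, equal to, or less than D(P‖R). -/
/-- Kullback-Leibler divergence between two distributions on `Fin (n+1)`. -/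
noncomputable def KL {n : ℕ} (P Q : Fin (n + 1) → ℝ) : ℝ :=
  ∑ j, P j * Real.log (P j / Q j)

/-- The mixed inner product `(A - B, C ⊖ B)` on the simplex: the η-coordinates of
`A - B` paired with the θ-coordinates of `C ⊖ B`, where `θ_j = log (Q_j / Q_1)`.
(The term at `j = 0` vanishes, so summing over all coordinates agrees with the
sum over `j = 2, …, n` in 1-based indexing.) -/
noncomputable def mixedInner {n : ℕ} (A B C : Fin (n + 1) → ℝ) : ℝ :=
  ∑ j, (A j - B j) * (Real.log (C j / C 0) - Real.log (B j / B 0))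

theorem stmt16 (n : ℕ) (P Q R : Fin (n + 1) → ℝ)
    (hP : ∀ j, 0 < P j) (hPsum : ∑ j, P j = 1)
    (hQ : ∀ j, 0 < Q j) (hQsum : ∑ j, Q j = 1)
    (hR : ∀ j, 0 < R j) (hRsum : ∑ j, R j = 1) :
    ((0 < mixedInner P Q R) ↔ KL P R < KL P Q + KL Q R) ∧
    ((mixedInner P Q R = 0) ↔ KL P Q + KL Q R = KL P R) ∧
    ((mixedInner P Q R < 0) ↔ KL P Q + KL Q R < KL P R) := by
  have key : mixedInner P Q R = KL P Q + KL Q R - KL P R := by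
    have e1 : mixedInner P Q R =
        (∑ j, (P j - Q j) * (Real.log (R j) - Real.log (Q j))) -
        (∑ j, (P j - Q j)) * (Real.log (R 0) - Real.log (Q 0)) := by
      unfold mixedInner
      rw [Finset.sum_mul, ← Finset.sum_sub_distrib]
      apply Finset.sum_congr rfl
      intro j _
      rw [Real.log_div (hR j).ne' (hR 0).ne', Real.log_div (hQ j).ne' (hQ 0).ne']
      ring
    have e2 : (∑ j, (P j - Q j)) = 0 := by
      rw [Finset.sum_sub_distrib, hPsum, hQsum]; ring
    have e3 : KL P Q + KL Q R - KL P R =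
        ∑ j, (P j - Q j) * (Real.log (R j) - Real.log (Q j)) := by
      unfold KL
      rw [← Finset.sum_add_distrib, ← Finset.sum_sub_distrib]
      apply Finset.sum_congr rfl
      intro j _
      rw [Real.log_div (hP j).ne' (hQ j).ne', Real.log_div (hQ j).ne' (hR j).ne',
        Real.log_div (hP j).ne' (hR j).ne']
      ring
    rw [e1, e2, e3]; ring
  refine ⟨⟨fun h => by linarith, fun h => by linarith⟩,
    ⟨fun h => by linarith, fun h => by linarith⟩,
    ⟨fun h => by linarith, fun h => by linarith⟩⟩
end

section
/- Let P^1,...,P^m ∈ Δ^n be in general position (P^2-P^1,...,P^m-P^1 linearly independent) and L_0 = {Σλ_iP^i : Σλ_i = 1} ∩ Δ^n their affine hull in Δ^n. Then there exists a unique Q^0 ∈ L_0 with D(P^i‖Q^0) = D(P^1‖Q^0) for all i = 2,...,m. -/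
lemma aux_mul_log_diff_le {x y : ℝ} (hx : 0 < x) (hy : 0 < y) :
    x * Real.log x - y * Real.log y ≤ (Real.log x + 1) * (x - y) := by
  have h := Real.log_le_sub_one_of_pos (div_pos hx hy)
  rw [Real.log_div hx.ne' hy.ne'] at h
  have h2 : y * (Real.log x - Real.log y) ≤ y * (x / y - 1) :=
    mul_le_mul_of_nonneg_left h hy.le
  have h3 : y * (x / y - 1) = x - y := by field_simp
  nlinarith [h2, h3]

lemma aux_nonneg {x y : ℝ} (hx : 0 < x) (hy : 0 < y) :
    0 ≤ (x - y) * (Real.log x - Real.log y) := by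
  rcases lt_trichotomy x y with h | h | h
  · nlinarith [Real.log_lt_log hx h]
  · simp [h]
  · nlinarith [Real.log_lt_log hy h]

lemma aux_eq {x y : ℝ} (hx : 0 < x) (hy : 0 < y)
    (h : (x - y) * (Real.log x - Real.log y) = 0) : x = y := by
  rcases lt_trichotomy x y with h1 | h1 | h1
  · nlinarith [Real.log_lt_log hx h1]
  · exact h1
  · nlinarith [Real.log_lt_log hy h1]

lemma aux_bounded {m N : ℕ} (V : Fin m → (Fin N → ℝ)) (hV : LinearIndependent ℝ V) :
    ∃ c : ℝ, 0 < c ∧ ∀ μ : Fin m → ℝ, ‖μ‖ ≤ c * ‖∑ i, μ i • V i‖ := by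
  let L : (Fin m → ℝ) →ₗ[ℝ] (Fin N → ℝ) :=
    { toFun := fun μ => ∑ i, μ i • V i
      map_add' := fun x y => by simp [add_smul, Finset.sum_add_distrib]
      map_smul' := fun c x => by simp [smul_smul, Finset.smul_sum] }
  have hLapp : ∀ μ, L μ = ∑ i, μ i • V i := fun μ => rfl
  have hinj : Function.Injective L := by
    intro x y hxy
    have h0 : L (x - y) = 0 := by rw [map_sub, hxy, sub_self]
    have h1 := Fintype.linearIndependent_iff.mp hV (x - y) (by rw [← hLapp]; exact h0)
    funext i
    have := h1 i
    simp only [Pi.sub_apply, sub_eq_zero] at this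
    exact this
  let e := LinearEquiv.ofInjective L hinj
  let e' := e.toContinuousLinearEquiv
  refine ⟨(‖(e'.symm : ↥(LinearMap.range L) →L[ℝ] (Fin m → ℝ))‖₊ : ℝ) + 1, by positivity, fun μ => ?_⟩
  have h := e'.antilipschitz.le_mul_dist μ 0
  simp only [map_zero, dist_zero_right] at h
  have hcoe : ((e' μ : ↥(LinearMap.range L)) : Fin N → ℝ) = ∑ i, μ i • V i := by
    have h1 : (e' μ : ↥(LinearMap.range L)) = e μ := rfl
    rw [h1]
    rw [LinearEquiv.ofInjective_apply]
    exact hLapp μ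
  have hnorm : ‖e' μ‖ = ‖∑ i, μ i • V i‖ := by
    rw [← hcoe]; rfl
  rw [hnorm] at h
  have := norm_nonneg (∑ i, μ i • V i)
  nlinarith [h]

lemma KL_expand {n : ℕ} (Pi' Q : Fin (n+1) → ℝ) (hP : ∀ j, 0 < Pi' j) (hQ : ∀ j, 0 < Q j) :
    KL Pi' Q = (∑ j, Pi' j * Real.log (Pi' j)) - ∑ j, Pi' j * Real.log (Q j) := by
  unfold KL
  rw [← Finset.sum_sub_distrib]
  refine Finset.sum_congr rfl fun j _ => ?_
  rw [Real.log_div (hP j).ne' (hQ j).ne']; ring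
set_option maxHeartbeats 1000000 in
theorem stmt17 (n m : ℕ) (P : Fin (m + 1) → (Fin (n + 1) → ℝ))
    (hPpos : ∀ i j, 0 < P i j) (hPsum : ∀ i, ∑ j, P i j = 1)
    (hgen : LinearIndependent ℝ (fun i : Fin m => P i.succ - P 0)) :
    ∃! Q0 : Fin (n + 1) → ℝ,
      ((∃ lam : Fin (m + 1) → ℝ, (∑ i, lam i) = 1 ∧ Q0 = ∑ i, lam i • P i) ∧
        (∀ j, 0 < Q0 j) ∧ (∑ j, Q0 j) = 1) ∧
      ∀ i, KL (P i) Q0 = KL (P 0) Q0 := by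
  obtain ⟨V, hVdef⟩ : ∃ V : Fin m → Fin (n+1) → ℝ, V = fun i => P i.succ - P 0 := ⟨_, rfl⟩
  have hVij : ∀ i j, V i j = P i.succ j - P 0 j := by intro i j; rw [hVdef]; rfl
  have hgen' : LinearIndependent ℝ V := by rw [hVdef]; exact hgen
  obtain ⟨Qf, hQf⟩ : ∃ Qf : (Fin m → ℝ) → Fin (n+1) → ℝ,
      Qf = fun μ j => P 0 j + ∑ i, μ i * V i j := ⟨_, rfl⟩
  have hQapp : ∀ μ j, Qf μ j = P 0 j + ∑ i, μ i * V i j := by intro μ j; rw [hQf]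
  obtain ⟨a, ha⟩ : ∃ a : Fin m → ℝ,
      a = fun i => (∑ j, P i.succ j * Real.log (P i.succ j))
        - ∑ j, P 0 j * Real.log (P 0 j) := ⟨_, rfl⟩
  obtain ⟨f, hfapp⟩ : ∃ f : (Fin m → ℝ) → ℝ,
      ∀ μ, f μ = (∑ j, Qf μ j * Real.log (Qf μ j)) - ∑ i, μ i * a i := ⟨_, fun _ => rfl⟩
  have hPle1 : ∀ i j, P i j ≤ 1 := by
    intro i j
    have h := Finset.single_le_sum (f := fun k => P i k) (fun k _ => (hPpos i k).le)
      (Finset.mem_univ j)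
    rw [hPsum i] at h; exact h
  have hVsum0 : ∀ i, ∑ j, V i j = 0 := by
    intro i
    have h : ∑ j, V i j = ∑ j, (P i.succ j - P 0 j) := Finset.sum_congr rfl fun j _ => hVij i j
    rw [h, Finset.sum_sub_distrib, hPsum, hPsum]; ring
  have hQsum : ∀ μ, ∑ j, Qf μ j = 1 := by
    intro μ
    have h1 : ∑ j, Qf μ j = ∑ j, (P 0 j + ∑ i, μ i * V i j) :=
      Finset.sum_congr rfl fun j _ => hQapp μ j
    rw [h1, Finset.sum_add_distrib, hPsum 0, Finset.sum_comm]
    have h2 : ∀ i : Fin m, ∑ j, μ i * V i j = 0 := by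
      intro i; rw [← Finset.mul_sum, hVsum0, mul_zero]
    rw [Finset.sum_congr rfl fun i _ => h2 i]; simp
  obtain ⟨K, hKmem⟩ : ∃ K : Set (Fin m → ℝ), ∀ μ, μ ∈ K ↔ ∀ j, 0 ≤ Qf μ j :=
    ⟨{μ | ∀ j, 0 ≤ Qf μ j}, fun μ => Iff.rfl⟩
  have hQle1 : ∀ μ ∈ K, ∀ j, Qf μ j ≤ 1 := by
    intro μ hμ j
    have h := Finset.single_le_sum (f := fun k => Qf μ k) (fun k _ => (hKmem μ).mp hμ k)
      (Finset.mem_univ j)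
    rw [hQsum μ] at h; exact h
  have hQcont : ∀ j, Continuous fun μ => Qf μ j := by
    intro j
    have h : (fun μ => Qf μ j) = fun μ => P 0 j + ∑ i, μ i * V i j := funext fun μ => hQapp μ j
    rw [h]
    exact continuous_const.add
      (continuous_finset_sum _ fun i _ => (continuous_apply i).mul continuous_const)
  have hKclosed : IsClosed K := by
    have h : K = ⋂ j, (fun μ => Qf μ j) ⁻¹' Set.Ici 0 := by
      ext μ; simp [hKmem, Set.mem_iInter]
    rw [h]
    exact isClosed_iInter fun j => isClosed_Ici.preimage (hQcont j)
  have hKbdd : Bornology.IsBounded K := by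
    obtain ⟨c, hc, hcb⟩ := aux_bounded V hgen'
    rw [isBounded_iff_forall_norm_le]
    refine ⟨c * 1, fun μ hμ => ?_⟩
    have hb : ‖∑ i, μ i • V i‖ ≤ 1 := by
      rw [pi_norm_le_iff_of_nonneg zero_le_one]
      intro j
      have hLj : (∑ i, μ i • V i) j = Qf μ j - P 0 j := by
        rw [hQapp]; simp [Finset.sum_apply]
      rw [Real.norm_eq_abs, hLj, abs_le]
      constructor
      · have h1 := (hKmem μ).mp hμ j; have h2 := hPle1 0 j; linarith
      · have h1 := hQle1 μ hμ j; have h2 := hPpos 0 j; linarith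
    calc ‖μ‖ ≤ c * ‖∑ i, μ i • V i‖ := hcb μ
      _ ≤ c * 1 := mul_le_mul_of_nonneg_left hb hc.le
  have hK0 : (0 : Fin m → ℝ) ∈ K := by
    rw [hKmem]; intro j; rw [hQapp]; simp; exact (hPpos 0 j).le
  have hfc : ContinuousOn f K := by
    have h : Continuous f := by
      have h1 : f = fun μ => (∑ j, Qf μ j * Real.log (Qf μ j)) - ∑ i, μ i * a i :=
        funext hfapp
      rw [h1]
      refine Continuous.sub ?_ ?_
      · exact continuous_finset_sum _ fun j _ => Real.continuous_mul_log.comp (hQcont j)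
      · exact continuous_finset_sum _ fun i _ => (continuous_apply i).mul continuous_const
    exact h.continuousOn
  obtain ⟨μ₀, hμ₀K, hmin⟩ :=
    (Metric.isCompact_of_isClosed_isBounded hKclosed hKbdd).exists_isMinOn ⟨0, hK0⟩ hfc
  have hmin' : ∀ x ∈ K, f μ₀ ≤ f x := isMinOn_iff.mp hmin
  obtain ⟨q, hq⟩ : ∃ q : Fin (n+1) → ℝ, q = Qf μ₀ := ⟨_, rfl⟩
  have hq0 : ∀ j, 0 ≤ q j := by rw [hq]; exact (hKmem μ₀).mp hμ₀K
  have hq1 : ∀ j, q j ≤ 1 := by rw [hq]; exact hQle1 μ₀ hμ₀K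
  -- positivity of the minimizer
  have hqpos : ∀ j, 0 < q j := by
    by_contra hcon
    push_neg at hcon
    obtain ⟨j0, hj0⟩ := hcon
    have hq0j : q j0 = 0 := le_antisymm hj0 (hq0 j0)
    obtain ⟨D, hD⟩ : ∃ D : Fin (n+1) → ℝ,
        D = fun j => if 0 < q j then 1 - Real.log (q j / 2) else 0 := ⟨_, rfl⟩
    obtain ⟨C, hC⟩ : ∃ C : ℝ, C = ∑ j, D j := ⟨_, rfl⟩
    obtain ⟨S, hS⟩ : ∃ S : ℝ, S = ∑ i, μ₀ i * a i := ⟨_, rfl⟩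
    obtain ⟨A, hA⟩ : ∃ A : ℝ, A = |S| := ⟨_, rfl⟩
    obtain ⟨t, htdef⟩ : ∃ t : ℝ, t = min (1/2) (Real.exp (-(C + A + 1) / P 0 j0)) := ⟨_, rfl⟩
    have ht0 : 0 < t := by rw [htdef]; exact lt_min (by norm_num) (Real.exp_pos _)
    have ht2 : t ≤ 1/2 := by rw [htdef]; exact min_le_left _ _
    have ht1 : t < 1 := lt_of_le_of_lt ht2 (by norm_num)
    have htlog0 : Real.log t ≤ 0 := Real.log_nonpos ht0.le ht1.le
    have htlog : Real.log t ≤ -(C + A + 1) / P 0 j0 := by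
      calc Real.log t ≤ Real.log (Real.exp (-(C + A + 1) / P 0 j0)) :=
            Real.log_le_log ht0 (by rw [htdef]; exact min_le_right _ _)
        _ = -(C + A + 1) / P 0 j0 := Real.log_exp _
    obtain ⟨μt, hμtdef⟩ : ∃ μt : Fin m → ℝ, μt = (1 - t) • μ₀ := ⟨_, rfl⟩
    have hQt : ∀ j, Qf μt j = (1 - t) * q j + t * P 0 j := by
      intro j
      rw [hQapp]
      have h2 : ∀ i : Fin m, μt i * V i j = (1 - t) * (μ₀ i * V i j) := by
        intro i; rw [hμtdef]; simp; ring
      rw [Finset.sum_congr rfl fun i _ => h2 i, ← Finset.mul_sum]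
      have h3 : q j = P 0 j + ∑ i, μ₀ i * V i j := by rw [hq, hQapp]
      rw [h3]; ring
    have hμtK : μt ∈ K := by
      rw [hKmem]
      intro j; rw [hQt j]
      have h1 := hq0 j; have h2 := (hPpos 0 j).le
      nlinarith
    have hterm : ∀ j, Qf μt j * Real.log (Qf μt j) - q j * Real.log (q j)
        ≤ t * D j + (if j = j0 then t * (P 0 j0 * Real.log t) else 0) := by
      intro j
      by_cases hqj : 0 < q j
      · have hjne : j ≠ j0 := by intro h; rw [h, hq0j] at hqj; exact lt_irrefl 0 hqj
        rw [hD]; simp only [if_pos hqj, if_neg hjne, add_zero]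
        have hx1 : Qf μt j ≤ 1 := hQle1 μt hμtK j
        have hxpos : 0 < Qf μt j := by rw [hQt j]; nlinarith [hPpos 0 j]
        have hxge : q j / 2 ≤ Qf μt j := by rw [hQt j]; nlinarith [(hPpos 0 j).le]
        have h1 := aux_mul_log_diff_le hxpos hqj
        have hlx0 : Real.log (Qf μt j) ≤ 0 := Real.log_nonpos hxpos.le hx1
        have hlxg : Real.log (q j / 2) ≤ Real.log (Qf μt j) := Real.log_le_log (by positivity) hxge
        have hL0 : Real.log (q j / 2) ≤ 0 := Real.log_nonpos (by positivity) (by linarith [hq1 j])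
        have hxq : Qf μt j - q j = t * (P 0 j - q j) := by rw [hQt j]; ring
        have hb1 : -1 ≤ P 0 j - q j := by linarith [hq1 j, (hPpos 0 j).le]
        have hb2 : P 0 j - q j ≤ 1 := by linarith [hPle1 0 j, hq0 j]
        have hkey : (Real.log (Qf μt j) + 1) * (P 0 j - q j) ≤ 1 - Real.log (q j / 2) := by
          rcases le_or_gt 0 (Real.log (Qf μt j) + 1) with hcs | hcs
          · have h5 := mul_le_mul_of_nonneg_left hb2 hcs
            nlinarith
          · have h5 := mul_le_mul_of_nonpos_left hb1 hcs.le
            nlinarith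
        calc Qf μt j * Real.log (Qf μt j) - q j * Real.log (q j)
            ≤ (Real.log (Qf μt j) + 1) * (Qf μt j - q j) := h1
          _ = t * ((Real.log (Qf μt j) + 1) * (P 0 j - q j)) := by rw [hxq]; ring
          _ ≤ t * (1 - Real.log (q j / 2)) := mul_le_mul_of_nonneg_left hkey ht0.le
      · have hqj0 : q j = 0 := le_antisymm (not_lt.mp hqj) (hq0 j)
        rw [hD]; simp only [if_neg hqj]
        have hxval : Qf μt j = t * P 0 j := by rw [hQt j, hqj0]; ring
        have hxpos : 0 < t * P 0 j := mul_pos ht0 (hPpos 0 j)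
        have hlog : Real.log (t * P 0 j) = Real.log t + Real.log (P 0 j) :=
          Real.log_mul ht0.ne' (hPpos 0 j).ne'
        have hlogP : Real.log (P 0 j) ≤ 0 := Real.log_nonpos (hPpos 0 j).le (hPle1 0 j)
        have hle : Qf μt j * Real.log (Qf μt j) ≤ t * (P 0 j * Real.log t) := by
          rw [hxval, hlog]; nlinarith [hxpos]
        by_cases hj : j = j0
        · rw [if_pos hj, hqj0]
          rw [hj] at hle
          rw [hj]
          simp only [mul_zero, zero_mul, sub_zero]
          linarith [hle]
        · rw [if_neg hj, hqj0]
          have h8 : t * (P 0 j * Real.log t) ≤ 0 := by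
            have h9 : 0 ≤ t * P 0 j := mul_nonneg ht0.le (hPpos 0 j).le
            calc t * (P 0 j * Real.log t) = (t * P 0 j) * Real.log t := by ring
              _ ≤ 0 := mul_nonpos_iff.mpr (Or.inl ⟨h9, htlog0⟩)
          simp only [mul_zero, zero_mul, sub_zero, add_zero]
          linarith [hle]
    have hsum1 : (∑ j, Qf μt j * Real.log (Qf μt j)) - ∑ j, q j * Real.log (q j)
        ≤ t * C + t * (P 0 j0 * Real.log t) := by
      rw [← Finset.sum_sub_distrib]
      calc ∑ j, (Qf μt j * Real.log (Qf μt j) - q j * Real.log (q j))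
          ≤ ∑ j, (t * D j + (if j = j0 then t * (P 0 j0 * Real.log t) else 0)) :=
            Finset.sum_le_sum fun j _ => hterm j
        _ = t * C + t * (P 0 j0 * Real.log t) := by
            rw [Finset.sum_add_distrib, ← Finset.mul_sum, ← hC,
              Finset.sum_ite_eq' Finset.univ j0]
            simp
    have hft : f μt - f μ₀ = ((∑ j, Qf μt j * Real.log (Qf μt j))
        - ∑ j, q j * Real.log (q j)) + t * S := by
      rw [hfapp, hfapp]
      have h2 : ∑ i, μt i * a i = (1 - t) * S := by
        rw [hS, Finset.mul_sum]
        refine Finset.sum_congr rfl fun i _ => ?_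
        rw [hμtdef]; simp; ring
      rw [h2, hq, hS]; ring
    have hCnn : 0 ≤ C := by
      rw [hC]; refine Finset.sum_nonneg fun j _ => ?_
      rw [hD]
      by_cases h : 0 < q j
      · simp only [if_pos h]
        have h9 : Real.log (q j / 2) ≤ 0 := Real.log_nonpos (by positivity) (by linarith [hq1 j])
        linarith
      · simp [if_neg h]
    have hPlog : P 0 j0 * Real.log t ≤ -(C + A + 1) := by
      have h1 : P 0 j0 * Real.log t ≤ P 0 j0 * (-(C + A + 1) / P 0 j0) :=
        mul_le_mul_of_nonneg_left htlog (hPpos 0 j0).le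
      have h2 : P 0 j0 * (-(C + A + 1) / P 0 j0) = -(C + A + 1) := by
        rw [mul_comm]; exact div_mul_cancel₀ _ (hPpos 0 j0).ne'
      linarith
    have hSA : S ≤ A := by rw [hA]; exact le_abs_self S
    have hlt : f μt < f μ₀ := by
      have h1 : t * (P 0 j0 * Real.log t) ≤ t * (-(C + A + 1)) :=
        mul_le_mul_of_nonneg_left hPlog ht0.le
      have h2 : t * S ≤ t * A := mul_le_mul_of_nonneg_left hSA ht0.le
      have h3 : t * C + t * (-(C + A + 1)) + t * A = -t := by ring
      linarith [hsum1, hft, h1, h2, h3, ht0]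
    exact absurd (hmin' μt hμtK) (not_le.mpr hlt)
  -- stationarity
  have hstat : ∀ i : Fin m, ∑ j, V i j * Real.log (q j) = a i := by
    intro i
    obtain ⟨u, hu⟩ : ∃ u : ℝ → (Fin m → ℝ), u = fun t => μ₀ + t • (Pi.single i 1 : Fin m → ℝ) := ⟨_, rfl⟩
    have hu0 : u 0 = μ₀ := by rw [hu]; simp
    have hucont : Continuous u := by
      rw [hu]; exact continuous_const.add (continuous_id.smul continuous_const)
    have hsingle : ∀ g : Fin m → ℝ, ∑ k, (Pi.single i (1:ℝ) : Fin m → ℝ) k * g k = g i := by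
      intro g
      rw [Finset.sum_eq_single i]
      · simp
      · intro k _ hk; rw [Pi.single_eq_of_ne hk, zero_mul]
      · intro h; exact absurd (Finset.mem_univ i) h
    have hQu : ∀ t j, Qf (u t) j = q j + t * V i j := by
      intro t j
      rw [hQapp]
      have h1 : ∀ k : Fin m, u t k * V k j
          = μ₀ k * V k j + t * ((Pi.single i (1:ℝ) : Fin m → ℝ) k * V k j) := by
        intro k; rw [hu]; simp; ring
      rw [Finset.sum_congr rfl fun k _ => h1 k, Finset.sum_add_distrib, ← Finset.mul_sum,
        hsingle fun k => V k j]
      have h3 : q j = P 0 j + ∑ k, μ₀ k * V k j := by rw [hq, hQapp]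
      rw [h3]; ring
    have husum : ∀ t, ∑ k, u t k * a k = (∑ k, μ₀ k * a k) + t * a i := by
      intro t
      have h1 : ∀ k : Fin m, u t k * a k = μ₀ k * a k + t * ((Pi.single i (1:ℝ) : Fin m → ℝ) k * a k) := by
        intro k; rw [hu]; simp; ring
      rw [Finset.sum_congr rfl fun k _ => h1 k, Finset.sum_add_distrib, ← Finset.mul_sum,
        hsingle a]
    have hgeq : (fun t => f (u t)) = fun t =>
        (∑ j, (q j + t * V i j) * Real.log (q j + t * V i j))
          - ((∑ k, μ₀ k * a k) + t * a i) := by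
      funext t
      rw [hfapp, husum t]
      congr 1
      exact Finset.sum_congr rfl fun j _ => by rw [hQu t j]
    have hUopen : IsOpen {μ : Fin m → ℝ | ∀ j, 0 < Qf μ j} := by
      have h : {μ : Fin m → ℝ | ∀ j, 0 < Qf μ j} = ⋂ j, (fun μ => Qf μ j) ⁻¹' Set.Ioi 0 := by
        ext μ; simp [Set.mem_iInter]
      rw [h]
      exact isOpen_iInter_of_finite fun j => isOpen_Ioi.preimage (hQcont j)
    have hUsub : {μ : Fin m → ℝ | ∀ j, 0 < Qf μ j} ⊆ K := by
      intro μ hμ; rw [hKmem]; exact fun j => (hμ j).le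
    have hμ₀U : μ₀ ∈ {μ : Fin m → ℝ | ∀ j, 0 < Qf μ j} := by
      intro j; rw [← hq]; exact hqpos j
    have hev : ∀ᶠ t in nhds (0:ℝ), u t ∈ {μ : Fin m → ℝ | ∀ j, 0 < Qf μ j} :=
      hucont.continuousAt.eventually_mem (hUopen.mem_nhds (by rw [hu0]; exact hμ₀U))
    have hloc : IsLocalMin (fun t => f (u t)) 0 := by
      refine hev.mono fun t htm => ?_
      show f (u 0) ≤ f (u t)
      rw [hu0]
      exact hmin' (u t) (hUsub htm)
    have hderiv : HasDerivAt (fun t => f (u t))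
        ((∑ j, (Real.log (q j) + 1) * V i j) - a i) 0 := by
      rw [hgeq]
      refine HasDerivAt.sub ?_ ?_
      · refine HasDerivAt.fun_sum fun j _ => ?_
        have h1 : HasDerivAt (fun t : ℝ => q j + t * V i j) (V i j) 0 :=
          (hasDerivAt_mul_const (V i j)).const_add (q j)
        have h2 : (q j + 0 * V i j) ≠ 0 := by simpa using (hqpos j).ne'
        have h3 := (Real.hasDerivAt_mul_log h2).comp 0 h1
        simp only [Function.comp_def] at h3
        simpa using h3
      · exact (hasDerivAt_mul_const (a i)).const_add _
    have hz := hloc.hasDerivAt_eq_zero hderiv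
    have hexp : (∑ j, (Real.log (q j) + 1) * V i j)
        = (∑ j, V i j * Real.log (q j)) + ∑ j, V i j := by
      rw [← Finset.sum_add_distrib]; exact Finset.sum_congr rfl fun j _ => by ring
    rw [hexp, hVsum0 i] at hz
    linarith [hz]
  -- KL characterization
  have hKLiff : ∀ Q : Fin (n+1) → ℝ, (∀ j, 0 < Q j) →
      ((∀ i, KL (P i) Q = KL (P 0) Q) ↔
        ∀ k : Fin m, ∑ j, V k j * Real.log (Q j) = a k) := by
    intro Q hQ
    have hexp : ∀ i, KL (P i) Q
        = (∑ j, P i j * Real.log (P i j)) - ∑ j, P i j * Real.log (Q j) :=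
      fun i => KL_expand _ _ (hPpos i) hQ
    have hVs : ∀ k : Fin m, ∑ j, V k j * Real.log (Q j)
        = (∑ j, P k.succ j * Real.log (Q j)) - ∑ j, P 0 j * Real.log (Q j) := by
      intro k
      rw [← Finset.sum_sub_distrib]
      exact Finset.sum_congr rfl fun j _ => by rw [hVij]; ring
    constructor
    · intro h k
      have h1 := h k.succ
      rw [hexp k.succ, hexp 0] at h1
      rw [hVs k, ha]
      simp only []
      linarith
    · intro h i
      refine Fin.cases rfl (fun k => ?_) i
      have h1 := h k
      rw [hVs k, ha] at h1
      simp only [] at h1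
      rw [hexp k.succ, hexp 0]
      linarith
  -- representation of affine combinations
  have hrepr : ∀ (c : Fin (m+1) → ℝ), (∑ i, c i) = 1 →
      ∀ j, (∑ i, c i • P i) j = P 0 j + ∑ k : Fin m, c k.succ * V k j := by
    intro c hc j
    rw [Finset.sum_apply]
    simp only [Pi.smul_apply, smul_eq_mul]
    rw [Fin.sum_univ_succ (f := fun i => c i * P i j)]
    have h1 : ∑ k : Fin m, c k.succ * V k j
        = (∑ k : Fin m, c k.succ * P k.succ j) - (∑ k : Fin m, c k.succ) * P 0 j := by
      rw [Finset.sum_mul, ← Finset.sum_sub_distrib]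
      exact Finset.sum_congr rfl fun k _ => by rw [hVij]; ring
    have h2 : ∑ k : Fin m, c k.succ = 1 - c 0 := by
      have h3 := Fin.sum_univ_succ (f := c)
      rw [hc] at h3; linarith
    rw [h1, h2]; ring
  obtain ⟨lam, hlamdef⟩ : ∃ lam : Fin (m+1) → ℝ,
      lam = Fin.cons (1 - ∑ i, μ₀ i) μ₀ := ⟨_, rfl⟩
  have hlamsum : (∑ i, lam i) = 1 := by
    rw [hlamdef, Fin.sum_univ_succ]
    simp [Fin.cons_zero, Fin.cons_succ]
  have hlamq : q = ∑ i, lam i • P i := by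
    funext j
    rw [hrepr lam hlamsum j]
    have h1 : ∀ k : Fin m, lam k.succ = μ₀ k := fun k => by rw [hlamdef]; simp
    rw [Finset.sum_congr rfl fun k _ => by rw [h1 k]]
    rw [hq, hQapp]
  have hqsum1 : (∑ j, q j) = 1 := by rw [hq]; exact hQsum μ₀
  have hqKL : ∀ i, KL (P i) q = KL (P 0) q := (hKLiff q hqpos).mpr hstat
  refine ⟨q, ⟨⟨⟨lam, hlamsum, hlamq⟩, hqpos, hqsum1⟩, hqKL⟩, ?_⟩
  rintro y ⟨⟨⟨lam', hlam1', hlamy⟩, hypos, _⟩, hyKL⟩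
  have hsty := (hKLiff y hypos).mp hyKL
  have hstq := (hKLiff q hqpos).mp hqKL
  have hdiff : ∀ j, y j - q j = ∑ k : Fin m, (lam' k.succ - lam k.succ) * V k j := by
    intro j
    have h1 : y j = P 0 j + ∑ k : Fin m, lam' k.succ * V k j := by
      rw [hlamy]; exact hrepr lam' hlam1' j
    have h2 : q j = P 0 j + ∑ k : Fin m, lam k.succ * V k j := by
      rw [hlamq]; exact hrepr lam hlamsum j
    have h3 : ∑ k : Fin m, (lam' k.succ - lam k.succ) * V k j
        = (∑ k : Fin m, lam' k.succ * V k j) - ∑ k : Fin m, lam k.succ * V k j := by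
      rw [← Finset.sum_sub_distrib]
      exact Finset.sum_congr rfl fun k _ => by ring
    rw [h1, h2, h3]; ring
  have hzero : ∑ j, (y j - q j) * (Real.log (y j) - Real.log (q j)) = 0 := by
    have h1 : ∀ j, (y j - q j) * (Real.log (y j) - Real.log (q j))
        = ∑ k : Fin m, (lam' k.succ - lam k.succ)
            * (V k j * (Real.log (y j) - Real.log (q j))) := by
      intro j
      rw [hdiff j, Finset.sum_mul]
      exact Finset.sum_congr rfl fun k _ => by ring
    rw [Finset.sum_congr rfl fun j _ => h1 j, Finset.sum_comm]
    refine Finset.sum_eq_zero fun k _ => ?_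
    rw [← Finset.mul_sum]
    have h2 : ∑ j, V k j * (Real.log (y j) - Real.log (q j))
        = (∑ j, V k j * Real.log (y j)) - ∑ j, V k j * Real.log (q j) := by
      rw [← Finset.sum_sub_distrib]
      exact Finset.sum_congr rfl fun j _ => by ring
    rw [h2, hsty k, hstq k]; ring
  have hall := (Finset.sum_eq_zero_iff_of_nonneg
    fun j _ => aux_nonneg (hypos j) (hqpos j)).mp hzero
  funext j
  exact aux_eq (hypos j) (hqpos j) (hall j (Finset.mem_univ j))
end
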